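/- Let G be an Abelian group of cardinality γ > ℵ₀. Then there exists a family (G_α)_{α<γ} of subgroups of G such that: G_0 is the trivial subgroup; G_α ⊊ G_β whenever α < β < γ; G_β = ⋃_{α<β} G_α for every limit ordinal β < γ; ⋃_{α<γ} G_α = G; and the index of G_α in G_{α+1} equals ℵ₀ for every α < γ. -/

import Mathlib

/-!
Enumerate `G` as `(g_α)_{α < γ}` and build the chain by transfinite recursion, taking unions at
limit stages. Inductively `|G_α| ≤ max |α| ℵ₀ < γ`, so `G ⧸ G_α` is infinite; a countably infinite
subgroup of it containing the image of `g_α` pulls back to `G_{α+1} ∋ g_α` with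
`[G_{α+1} : G_α] = ℵ₀`, which preserves the bound. As `γ.ord` is a limit ordinal, each `g_α` lies
in some `G_{α+1}` with `α + 1 < γ.ord`.
-/

open Cardinal Pointwise

universe u

namespace Ordinal

variable {α : Type*} [CompleteLattice α]

/-- Unlike `transfiniteIterate`, the step may depend on the stage. -/
noncomputable def transfiniteIter (step : Ordinal.{u} → α → α) (o : Ordinal.{u}) : α :=
  limitRecOn o ⊥ step fun β _ ih ↦ ⨆ (γ) (h : γ < β), ih γ h

variable (step : Ordinal.{u} → α → α)

@[simp]
theorem transfiniteIter_zero : transfiniteIter step 0 = ⊥ :=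
  limitRecOn_zero ..

theorem transfiniteIter_add_one (o : Ordinal.{u}) :
    transfiniteIter step (o + 1) = step o (transfiniteIter step o) :=
  limitRecOn_add_one ..

theorem transfiniteIter_of_isSuccLimit {o : Ordinal.{u}} (ho : Order.IsSuccLimit o) :
    transfiniteIter step o = ⨆ (β) (_ : β < o), transfiniteIter step β :=
  limitRecOn_limit _ _ _ _ ho

theorem monotone_transfiniteIter (hstep : ∀ o a, a ≤ step o a) :
    Monotone (transfiniteIter step) := by
  intro β o hβo
  induction o using limitRecOn with
  | zero => rw [nonpos_iff_eq_zero.1 hβo]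
  | add_one o ih =>
    rcases hβo.eq_or_lt with rfl | h
    · rfl
    · rw [transfiniteIter_add_one]
      exact (ih (Order.lt_add_one_iff.1 h)).trans (hstep _ _)
  | limit o ho _ =>
    rcases hβo.eq_or_lt with rfl | h
    · rfl
    · rw [transfiniteIter_of_isSuccLimit step ho]
      exact le_iSup₂_of_le β h le_rfl

end Ordinal

theorem Cardinal.exists_surjOn_Iio_ord (α : Type u) [Nonempty α] :
    ∃ f : Ordinal.{u} → α, Set.SurjOn f (Set.Iio (#α).ord) Set.univ := by
  obtain ⟨e⟩ : Nonempty ((#α).ord.ToType ≃ α) := Cardinal.eq.1 (by rw [mk_toType, card_ord])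
  classical
  refine ⟨fun o ↦ if h : o < (#α).ord then e (Ordinal.ToType.mk ⟨o, h⟩) else Classical.arbitrary α,
    fun x _ ↦ ?_⟩
  obtain ⟨o, ho⟩ : ∃ o, Ordinal.ToType.mk o = e.symm x := ⟨_, OrderIso.apply_symm_apply _ _⟩
  exact ⟨o, o.2, by simp [ho, Set.mem_Iio.1 o.2]⟩

open Ordinal

namespace Subgroup

section Group

variable {G : Type*} [Group G]

theorem cardinalMk_closure_le_max (s : Set G) : #(closure s) ≤ max #s ℵ₀ := by
  rcases isEmpty_or_nonempty s with hs | hs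
  · rw [Set.isEmpty_coe_sort.1 hs, closure_empty]
    exact (le_one_iff_subsingleton.2 inferInstance).trans (one_le_aleph0.trans (le_max_right _ _))
  · rw [FreeGroup.closure_eq_range]
    exact (mk_le_of_surjective (MonoidHom.rangeRestrict_surjective _)).trans (mk_freeGroup s).le

theorem exists_mem_cardinalMk_eq_aleph0 [Infinite G] (g : G) :
    ∃ S : Subgroup G, g ∈ S ∧ #S = ℵ₀ := by
  obtain ⟨s, hs⟩ := le_mk_iff_exists_set.1 (aleph0_le_mk G)
  have hgs : #(insert g s : Set G) = ℵ₀ :=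
    le_antisymm (mk_insert_le.trans (by simp [hs]))
      (hs ▸ mk_le_mk_of_subset (Set.subset_insert _ _))
  refine ⟨closure (insert g s), subset_closure (Set.mem_insert _ _), le_antisymm ?_ ?_⟩
  · simpa [hgs] using cardinalMk_closure_le_max (insert g s)
  · exact hgs ▸ mk_le_mk_of_subset subset_closure

theorem cardinalMk_eq_quotient_mul (H : Subgroup G) : #G = #(G ⧸ H) * #H := by
  rw [mk_congr groupEquivQuotientProdSubgroup, mk_prod, Cardinal.lift_id, Cardinal.lift_id]

theorem cardinalMk_eq_quotient_subgroupOf_mul {H K : Subgroup G} (h : H ≤ K) :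
    #K = #(K ⧸ H.subgroupOf K) * #H := by
  rw [cardinalMk_eq_quotient_mul (H.subgroupOf K), mk_congr (subgroupOfEquivOfLe h).toEquiv]

theorem infinite_quotient_of_cardinalMk_lt (hG : ℵ₀ ≤ #G) {H : Subgroup G} (hH : #H < #G) :
    Infinite (G ⧸ H) := by
  rw [infinite_iff]
  by_contra! h
  exact (mul_lt_of_lt hG (h.trans_le hG) hH).ne (cardinalMk_eq_quotient_mul H).symm

theorem lt_of_le_of_one_lt_cardinalMk_quotient {H K : Subgroup G} (hle : H ≤ K)
    (hK : 1 < #(K ⧸ H.subgroupOf K)) : H < K := by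
  refine hle.lt_of_ne ?_
  rintro rfl
  rw [subgroupOf_self] at hK
  exact hK.not_ge (le_one_iff_subsingleton.2 QuotientGroup.subsingleton_quotient_top)

theorem exists_le_mem_cardinalMk_quotient_eq_aleph0 (H : Subgroup G) [H.Normal]
    [Infinite (G ⧸ H)] (g : G) :
    ∃ K : Subgroup G, H ≤ K ∧ g ∈ K ∧ #(K ⧸ H.subgroupOf K) = ℵ₀ := by
  obtain ⟨S, hgS, hS⟩ := exists_mem_cardinalMk_eq_aleph0 (g : G ⧸ H)
  set φ := (QuotientGroup.mk' H).subgroupComap S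
  have hker : φ.ker = H.subgroupOf (S.comap (QuotientGroup.mk' H)) := by
    ext x
    rw [mem_subgroupOf, MonoidHom.mem_ker, ← QuotientGroup.eq_one_iff, Subtype.ext_iff]
    rfl
  refine ⟨S.comap (QuotientGroup.mk' H), ?_, hgS, ?_⟩
  · simpa using MonoidHom.ker_le_comap (QuotientGroup.mk' H) S
  · rw [← hS, ← hker]
    have hφ := MonoidHom.subgroupComap_surjective_of_surjective _ S (QuotientGroup.mk'_surjective H)
    exact mk_congr (QuotientGroup.quotientKerEquivOfSurjective φ hφ).toEquiv

theorem exists_le_mem_and_cardinalMk_quotient_eq_aleph0 (H : Subgroup G) [H.Normal] (g : G) :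
    ∃ K : Subgroup G, H ≤ K ∧ g ∈ K ∧
      (Infinite (G ⧸ H) → #(K ⧸ H.subgroupOf K) = ℵ₀) := by
  by_cases hH : Infinite (G ⧸ H)
  · obtain ⟨K, hHK, hgK, hK⟩ := exists_le_mem_cardinalMk_quotient_eq_aleph0 H g
    exact ⟨K, hHK, hgK, fun _ ↦ hK⟩
  · exact ⟨⊤, le_top, mem_top g, fun h ↦ absurd h hH⟩

theorem coe_transfiniteIter_of_isSuccLimit {step : Ordinal.{u} → Subgroup G → Subgroup G}
    (hstep : ∀ o H, H ≤ step o H) {o : Ordinal.{u}}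
    (ho : Order.IsSuccLimit o) :
    ((transfiniteIter step o : Subgroup G) : Set G) =
      ⋃ β < o, ((transfiniteIter step β : Subgroup G) : Set G) := by
  have hmono := monotone_transfiniteIter step hstep
  ext x
  rw [transfiniteIter_of_isSuccLimit step ho, SetLike.mem_coe,
    mem_biSup_of_directedOn (p := (· < o)) ho.bot_lt fun i hi j hj ↦
      ⟨max i j, show max i j < o from max_lt hi hj, hmono (le_max_left i j),
        hmono (le_max_right i j)⟩]
  simp

end Group

theorem cardinalMk_transfiniteIter_le {G : Type u} [Group G]
    {step : Ordinal.{u} → Subgroup G → Subgroup G} {o : Ordinal.{u}}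
    (hstep : ∀ o H, H ≤ step o H)
    (hcard : ∀ β < o, ∀ H : Subgroup G, #H ≤ max β.card ℵ₀ → #(step β H) ≤ max β.card ℵ₀) :
    ∀ β < o, #(transfiniteIter step β : Subgroup G) ≤ max β.card ℵ₀ := by
  intro β
  induction β using limitRecOn with
  | zero =>
    intro _
    rw [transfiniteIter_zero]
    exact (le_one_iff_subsingleton.2 inferInstance).trans (one_le_aleph0.trans (le_max_right _ _))
  | add_one β ih =>
    intro hβ
    have hβo := (Order.lt_add_one_iff.2 le_rfl).trans hβ
    rw [transfiniteIter_add_one]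
    exact (hcard β hβo _ (ih hβo)).trans (max_le_max_right _ (card_le_card le_self_add))
  | limit β hβ ih =>
    intro hβo
    change #((transfiniteIter step β : Subgroup G) : Set G) ≤ _
    rw [coe_transfiniteIter_of_isSuccLimit hstep hβ]
    exact mk_biUnion_le_of_le (le_max_left _ _) (le_max_right _ _) _ fun α hα ↦
      (ih α hα (hα.trans hβo)).trans (max_le_max_right _ (card_le_card hα.le))

section CommGroup

variable {G : Type*} [CommGroup G]

noncomputable def extendCountably (H : Subgroup G) (g : G) : Subgroup G :=
  (exists_le_mem_and_cardinalMk_quotient_eq_aleph0 H g).choose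

theorem le_extendCountably (H : Subgroup G) (g : G) : H ≤ H.extendCountably g :=
  (exists_le_mem_and_cardinalMk_quotient_eq_aleph0 H g).choose_spec.1

theorem mem_extendCountably (H : Subgroup G) (g : G) : g ∈ H.extendCountably g :=
  (exists_le_mem_and_cardinalMk_quotient_eq_aleph0 H g).choose_spec.2.1

theorem cardinalMk_quotient_extendCountably (H : Subgroup G) [Infinite (G ⧸ H)] (g : G) :
    #(H.extendCountably g ⧸ H.subgroupOf (H.extendCountably g)) = ℵ₀ :=
  (exists_le_mem_and_cardinalMk_quotient_eq_aleph0 H g).choose_spec.2.2 ‹_›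

theorem cardinalMk_extendCountably_le (H : Subgroup G) [Infinite (G ⧸ H)] (g : G) :
    #(H.extendCountably g) ≤ max #H ℵ₀ := by
  rw [cardinalMk_eq_quotient_subgroupOf_mul (H.le_extendCountably g),
    cardinalMk_quotient_extendCountably]
  exact (mul_le_max _ _).trans
    (max_le (max_le (le_max_right _ _) (le_max_left _ _)) (le_max_right _ _))

end CommGroup

end Subgroup

open Subgroup

/-- Every Abelian group `G` of cardinality `γ > ℵ₀` admits a family `(G_α)_{α<γ}` of
subgroups with `G_0 = {e}`, `G_α ⊊ G_β` for `α < β < γ`, `G_β = ⋃_{α<β} G_α` for limit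
`β < γ`, `⋃_{α<γ} G_α = G`, and `[G_{α+1} : G_α] = ℵ₀` for every `α < γ`. -/
theorem exists_subgroup_chain (γ : Cardinal.{u}) (hγ : ℵ₀ < γ)
    (G : Type u) [CommGroup G] (hG : #G = γ) :
    ∃ Gs : Ordinal.{u} → Subgroup G,
      Gs 0 = ⊥ ∧
      (∀ α β : Ordinal.{u}, α < β → β < γ.ord → Gs α < Gs β) ∧
      (∀ β : Ordinal.{u}, β < γ.ord → Order.IsSuccLimit β →
        (Gs β : Set G) = ⋃ (α : Ordinal.{u}) (_ : α < β), (Gs α : Set G)) ∧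
      (⋃ (α : Ordinal.{u}) (_ : α < γ.ord), (Gs α : Set G)) = Set.univ ∧
      (∀ α : Ordinal.{u}, α < γ.ord →
        #(↥(Gs (α + 1)) ⧸ ((Gs α).subgroupOf (Gs (α + 1)))) = ℵ₀) := by
  subst hG
  obtain ⟨g, hg⟩ := exists_surjOn_Iio_ord G
  set Gs := transfiniteIter fun α (H : Subgroup G) ↦ H.extendCountably (g α)
  have hstep : ∀ α (H : Subgroup G), H ≤ H.extendCountably (g α) := fun _ H ↦ H.le_extendCountably _
  have hsucc : ∀ α, Gs (α + 1) = (Gs α).extendCountably (g α) := transfiniteIter_add_one _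
  have hsmall : ∀ β < (#G).ord, #(Gs β) ≤ max β.card ℵ₀ :=
    cardinalMk_transfiniteIter_le hstep fun β hβ H hH ↦ by
      have := infinite_quotient_of_cardinalMk_lt hγ.le (hH.trans_lt (max_lt (lt_ord.1 hβ) hγ))
      exact (H.cardinalMk_extendCountably_le (g β)).trans (max_le hH (le_max_right _ _))
  have hindex : ∀ α < (#G).ord, #(Gs (α + 1) ⧸ (Gs α).subgroupOf (Gs (α + 1))) = ℵ₀ := by
    intro α hα
    have := infinite_quotient_of_cardinalMk_lt hγ.le
      ((hsmall α hα).trans_lt (max_lt (lt_ord.1 hα) hγ))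
    rw [hsucc]
    exact cardinalMk_quotient_extendCountably _ _
  refine ⟨Gs, transfiniteIter_zero _, fun α β hαβ hβ ↦ ?_,
    fun β _ hβ ↦ coe_transfiniteIter_of_isSuccLimit hstep hβ, ?_, hindex⟩
  · have hlt := lt_of_le_of_one_lt_cardinalMk_quotient
      (monotone_transfiniteIter _ hstep le_self_add)
      (by rw [hindex α (hαβ.trans hβ)]; exact one_lt_aleph0)
    exact hlt.trans_le (monotone_transfiniteIter _ hstep (Order.add_one_le_of_lt hαβ))
  · refine Set.eq_univ_of_forall fun x ↦ ?_
    obtain ⟨α, hα, rfl⟩ := hg (Set.mem_univ x)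
    refine Set.mem_biUnion ((isSuccLimit_ord hγ.le).add_one_lt hα) ?_
    rw [SetLike.mem_coe, hsucc]
    exact mem_extendCountably _ _
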